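/- arXiv:1402.1197 — 2 statements merged into one kernel-verified Lean document; each statement's English description precedes it below -/
import Mathlib

section
/- Vinberg identity: for all multilinear maps h ∈ C^m, f ∈ C^n, g ∈ C^p, the associator of the total composition satisfies (h, f, g) = (−1)^{(n−1)(p−1)} (h, g, f); that is, the total composition makes C a graded right Vinberg (pre-Lie) algebra. -/
open Finset

section OperadPrelude

variable {K : Type*} [CommRing K] {L : Type*} [AddCommGroup L] [Module K L]

/-- `C K L n`: the `K`-module of `n`-multilinear maps `L^n → L`
(the degree-`n` component of the endomorphism operad of `L`). -/
abbrev C (K L : Type*) [CommRing K] [AddCommGroup L] [Module K L] (n : ℕ) :=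
  MultilinearMap K (fun _ : Fin n => L) L

/-- The extension of an `n`-ary multilinear operation to sequences `ℕ → L`:
it evaluates `f` on the first `n` entries of the sequence.  Two `n`-ary
multilinear operations are equal iff their extensions are equal, so operadic
identities are stated as identities between extensions. -/
def ex {n : ℕ} (f : C K L n) : (ℕ → L) → L := fun x => f fun j => x j.1

/-- The sign `(-1)^e` for an integer exponent `e`. -/
def sgn (e : ℤ) : ℤ := (((-1 : ℤˣ) ^ e : ℤˣ) : ℤ)

/-- Partial composition `f ∘ᵢ g`, where `n = deg g`:
`(f ∘ᵢ g)(x₀, x₁, …) = (-1)^{i(n-1)} f(x₀,…,x_{i-1}, g(x_i,…,x_{i+n-1}), x_{i+n},…)`. -/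
def pc (n i : ℕ) (f g : (ℕ → L) → L) : (ℕ → L) → L :=
  fun x => sgn ((i : ℤ) * ((n : ℤ) - 1)) •
    f fun j => if j < i then x j else if j = i then g (fun k => x (i + k)) else x (j + n - 1)

/-- Total composition `f ∘ g := Σ_{i=0}^{m-1} f ∘ᵢ g`, where `m = deg f`, `n = deg g`. -/
def tc (m n : ℕ) (f g : (ℕ → L) → L) : (ℕ → L) → L :=
  fun x => ∑ i ∈ Finset.range m, pc n i f g x

/-- The associator `(h, f, g) := (h ∘ f) ∘ g − h ∘ (f ∘ g)` of the total composition,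
where `m = deg h`, `n = deg f`, `p = deg g`. -/
def assoc (m n p : ℕ) (h f g : (ℕ → L) → L) : (ℕ → L) → L :=
  fun x => tc (m + n - 1) p (tc m n h f) g x - tc m (n + p - 1) h (tc n p f g) x

/-- The brace `⟨h|fg⟩ := Σ (h ∘ᵢ f) ∘ⱼ g`, summed over `0 ≤ i ≤ m-2`,
`i + n ≤ j ≤ m + n - 2`, where `m = deg h`, `n = deg f`, `p = deg g`. -/
def br2 (m n p : ℕ) (h f g : (ℕ → L) → L) : (ℕ → L) → L :=
  fun x => ∑ i ∈ Finset.range (m - 1), ∑ j ∈ Finset.Icc (i + n) (m + n - 2),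
    pc p j (pc n i h f) g x

/-- The triple brace `⟨h|fgb⟩ := Σ ((h ∘ᵢ f) ∘ⱼ g) ∘ₖ b`, summed over `0 ≤ i ≤ m-3`,
`i + n ≤ j ≤ m + n - 3`, `j + p ≤ k ≤ m + n + p - 3`, where
`m = deg h`, `n = deg f`, `p = deg g`, `q = deg b`. -/
def br3 (m n p q : ℕ) (h f g b : (ℕ → L) → L) : (ℕ → L) → L :=
  fun x => ∑ i ∈ Finset.range (m - 2), ∑ j ∈ Finset.Icc (i + n) (m + n - 3),
    ∑ k ∈ Finset.Icc (j + p) (m + n + p - 3),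
      pc q k (pc p j (pc n i h f) g) b x

/-- The Gerstenhaber bracket `[f,g] := f ∘ g − (-1)^{|f||g|} g ∘ f`,
where `m = deg f`, `n = deg g`, `|f| = m - 1`, `|g| = n - 1`. -/
def gb (m n : ℕ) (f g : (ℕ → L) → L) : (ℕ → L) → L :=
  fun x => tc m n f g x - sgn (((m : ℤ) - 1) * ((n : ℤ) - 1)) • tc n m g f x

/-- The cup product `f ⌣ g := (-1)^{deg f} (μ ∘₀ f) ∘_{deg f} g`,
where `m = deg f`, `n = deg g`. -/
def cup (μ : C K L 2) (m n : ℕ) (f g : (ℕ → L) → L) : (ℕ → L) → L :=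
  fun x => sgn (m : ℤ) • pc n m (pc m 0 (ex μ) f) g x

/-- The coboundary operator `δ_μ f := −[f, μ]`, where `m = deg f`. -/
def delta (μ : C K L 2) (m : ℕ) (f : (ℕ → L) → L) : (ℕ → L) → L :=
  fun x => - gb m 2 f (ex μ) x

/- In `(h ∘ f) ∘ g` the terms `(h ∘ᵢ f) ∘ⱼ g` in which `g` is plugged into `f` cancel against
`h ∘ (f ∘ g)` by the sequential axiom of the endomorphism operad. The remaining terms have `f`
and `g` in disjoint slots of `h`: those with `g` to the right of `f` form the brace `⟨h|fg⟩`,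
and by the parallel axiom those with `g` to the left of `f` are `(-1)^{|f||g|}` times `⟨h|gf⟩`.
So `(h,f,g) = ⟨h|fg⟩ + (-1)^{|f||g|} ⟨h|gf⟩`, which is graded symmetric in `f` and `g`. -/

lemma sgn_add (a b : ℤ) : sgn (a + b) = sgn a * sgn b := by
  simp [sgn, zpow_add]

lemma sgn_mul_self (a : ℤ) : sgn a * sgn a = 1 := by
  rw [sgn, ← Units.val_mul, Int.units_mul_self, Units.val_one]

lemma sgn_smul_sgn_smul (a b : ℤ) (v : L) : sgn a • sgn b • v = sgn (a + b) • v := by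
  rw [smul_smul, sgn_add]

lemma sgn_smul_sgn_smul_self (a : ℤ) (v : L) : sgn a • sgn a • v = v := by
  rw [smul_smul, sgn_mul_self, one_smul]

/-- The argument sequence of `f` in `f ∘ᵢ g`, where `n = deg g`. -/
def insertAt {α : Type*} (n i : ℕ) (g : (ℕ → α) → α) (x : ℕ → α) : ℕ → α :=
  fun j => if j < i then x j else if j = i then g (fun k => x (i + k)) else x (j + n - 1)

lemma pc_apply (n i : ℕ) (f g : (ℕ → L) → L) (x : ℕ → L) :
    pc n i f g x = sgn ((i : ℤ) * ((n : ℤ) - 1)) • f (insertAt n i g x) := rfl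

section insertAt

variable {α : Type*} (n : ℕ) {i j : ℕ} (g : (ℕ → α) → α) (x : ℕ → α)

lemma insertAt_of_lt (h : j < i) : insertAt n i g x j = x j := if_pos h

lemma insertAt_self : insertAt n i g x i = g fun k => x (i + k) := by
  simp [insertAt]

lemma insertAt_of_gt (h : i < j) : insertAt n i g x j = x (j + n - 1) := by
  simp [insertAt, h.ne', h.not_gt]

lemma insertAt_eq_update :
    insertAt n i g x = Function.update (fun j => if j < i then x j else x (j + n - 1)) i
      (g fun k => x (i + k)) := by
  funext j
  rcases lt_trichotomy j i with hj | rfl | hj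
  · simp [insertAt_of_lt n g x hj, hj, hj.ne]
  · simp [insertAt_self]
  · simp [insertAt_of_gt n g x hj, hj.ne', hj.not_gt]

end insertAt

lemma insertAt_insertAt_add {α : Type*} (n p i l : ℕ) (hl : l < n) (f g : (ℕ → α) → α)
    (x : ℕ → α) :
    insertAt n i f (insertAt p (i + l) g x)
      = insertAt (n + p - 1) i (fun y => f (insertAt p l g y)) x := by
  funext t
  rcases lt_trichotomy t i with ht | rfl | ht
  · rw [insertAt_of_lt n _ _ ht, insertAt_of_lt p _ _ (by omega), insertAt_of_lt _ _ _ ht]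
  · rw [insertAt_self, insertAt_self]
    congr 1
    funext k
    rcases lt_trichotomy k l with hk | rfl | hk
    · rw [insertAt_of_lt p _ _ (by omega), insertAt_of_lt p _ _ hk]
    · rw [insertAt_self, insertAt_self]
      simp only [add_assoc]
    · rw [insertAt_of_gt p _ _ (by omega), insertAt_of_gt p _ _ hk]
      exact congrArg x (by omega)
  · rw [insertAt_of_gt n _ _ ht, insertAt_of_gt p _ _ (by omega), insertAt_of_gt _ _ _ ht]
    exact congrArg x (by omega)

lemma ex_congr {n : ℕ} (f : C K L n) {x y : ℕ → L} (hxy : ∀ k < n, x k = y k) :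
    ex f x = ex f y :=
  congrArg f (funext fun j => hxy j j.2)

lemma insertAt_ex_insertAt_of_add_le {n : ℕ} (p : ℕ) {i j : ℕ} (hij : i + n ≤ j) (f : C K L n)
    (g : (ℕ → L) → L) (x : ℕ → L) :
    insertAt n i (ex f) (insertAt p j g x)
      = insertAt p (j - n + 1) g (insertAt n i (ex f) x) := by
  funext t
  rcases lt_trichotomy t i with ht | rfl | ht
  · rw [insertAt_of_lt n _ _ ht, insertAt_of_lt p _ _ (by omega), insertAt_of_lt p _ _ (by omega),
      insertAt_of_lt n _ _ ht]
  · rw [insertAt_self, insertAt_of_lt p _ _ (by omega), insertAt_self]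
    exact ex_congr f fun k hk => insertAt_of_lt p g x (by omega)
  · rw [insertAt_of_gt n _ _ ht]
    rcases lt_trichotomy t (j - n + 1) with ht' | rfl | ht'
    · rw [insertAt_of_lt p _ _ (by omega), insertAt_of_lt p _ _ ht', insertAt_of_gt n _ _ ht]
    · rw [show j - n + 1 + n - 1 = j by omega, insertAt_self, insertAt_self]
      congr 1
      funext k
      rw [insertAt_of_gt n _ _ (by omega)]
      exact congrArg x (by omega)
    · rw [insertAt_of_gt p _ _ (by omega), insertAt_of_gt p _ _ ht',
        insertAt_of_gt n _ _ (by omega)]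
      exact congrArg x (by omega)

lemma ex_update {m : ℕ} (h : C K L m) (y : ℕ → L) {i : ℕ} (hi : i < m) (v : L) :
    ex h (Function.update y i v) = h (Function.update (fun j : Fin m => y j) ⟨i, hi⟩ v) := by
  refine congrArg h (funext fun j => ?_)
  simp only [Function.update_apply, Fin.ext_iff]

lemma ex_insertAt_smul {m : ℕ} (h : C K L m) {i : ℕ} (hi : i < m) (n : ℕ) (c : ℤ)
    (g : (ℕ → L) → L) (x : ℕ → L) :
    ex h (insertAt n i (fun y => c • g y) x) = c • ex h (insertAt n i g x) := by
  simp only [insertAt_eq_update, ex_update h _ hi]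
  rw [← Int.cast_smul_eq_zsmul K, MultilinearMap.map_update_smul, Int.cast_smul_eq_zsmul]

lemma ex_insertAt_sum {m : ℕ} (h : C K L m) {i : ℕ} (hi : i < m) (n : ℕ) {ι : Type*}
    (s : Finset ι) (g : ι → (ℕ → L) → L) (x : ℕ → L) :
    ex h (insertAt n i (fun y => ∑ a ∈ s, g a y) x) = ∑ a ∈ s, ex h (insertAt n i (g a) x) := by
  simp only [insertAt_eq_update, ex_update h _ hi, MultilinearMap.map_update_sum]

lemma pc_tc_left (m n p j : ℕ) (H F G : (ℕ → L) → L) (x : ℕ → L) :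
    pc p j (tc m n H F) G x = ∑ i ∈ range m, pc p j (pc n i H F) G x := by
  simp only [pc_apply, tc, smul_sum]

lemma pc_ex_tc {m : ℕ} (h : C K L m) {i : ℕ} (hi : i < m) (N n p : ℕ) (F G : (ℕ → L) → L)
    (x : ℕ → L) :
    pc N i (ex h) (tc n p F G) x = ∑ l ∈ range n, pc N i (ex h) (pc p l F G) x := by
  rw [pc_apply, show tc n p F G = fun y => ∑ l ∈ range n, pc p l F G y from rfl,
    ex_insertAt_sum h hi, smul_sum]
  rfl

lemma pc_ex_pc {m n : ℕ} (h : C K L m) {i l : ℕ} (hi : i < m) (hl : l < n) (p : ℕ)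
    (F G : (ℕ → L) → L) (x : ℕ → L) :
    pc (n + p - 1) i (ex h) (pc p l F G) x = pc p (i + l) (pc n i (ex h) F) G x := by
  rw [pc_apply, show pc p l F G = fun y => sgn (l * ((p : ℤ) - 1)) • F (insertAt p l G y) from rfl,
    ex_insertAt_smul h hi, pc_apply, pc_apply, ← insertAt_insertAt_add n p i l hl,
    sgn_smul_sgn_smul, sgn_smul_sgn_smul]
  congr 2
  rw [Nat.cast_sub (by omega)]
  push_cast
  ring

lemma pc_pc_ex_comm {n : ℕ} (p : ℕ) (f : C K L n) (H G : (ℕ → L) → L) {i j : ℕ}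
    (hij : i + n ≤ j) (x : ℕ → L) :
    pc p j (pc n i H (ex f)) G x
      = sgn (((n : ℤ) - 1) * ((p : ℤ) - 1)) • pc n i (pc p (j - n + 1) H G) (ex f) x := by
  simp only [pc_apply]
  rw [insertAt_ex_insertAt_of_add_le p hij, smul_comm (sgn _) (sgn ((i : ℤ) * _)),
    sgn_smul_sgn_smul, sgn_smul_sgn_smul, sgn_smul_sgn_smul]
  congr 2
  rw [Nat.cast_add, Nat.cast_sub (by omega)]
  ring

lemma br2_eq_sum_Ico (m n p : ℕ) (H F G : (ℕ → L) → L) (x : ℕ → L) :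
    br2 m n p H F G x
      = ∑ i ∈ range m, ∑ j ∈ Ico (i + n) (m + n - 1), pc p j (pc n i H F) G x := by
  obtain _ | k := m
  · simp [br2]
  rw [sum_range_succ, show k + 1 + n - 1 = k + n by omega, Ico_self, sum_empty, add_zero, br2]
  refine sum_congr rfl fun i hi => sum_congr ?_ fun _ _ => rfl
  rw [mem_range] at hi
  ext j
  simp only [mem_Icc, mem_Ico]
  omega

lemma sum_range_sum_Ico_sub_add (m p : ℕ) {M : Type*} [AddCommMonoid M] (S : ℕ → ℕ → M) :
    ∑ j ∈ range m, ∑ k ∈ Ico (j + p) (m + p - 1), S (k - p + 1) j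
      = ∑ i ∈ range m, ∑ j ∈ range i, S i j := by
  have shift (j : ℕ) : ∑ k ∈ Ico (j + p) (m + p - 1), S (k - p + 1) j
      = ∑ i ∈ Ico (j + 1) m, S i j := by
    refine sum_nbij' (fun k => k - p + 1) (fun i => i + p - 1) ?_ ?_ ?_ ?_ fun _ _ => rfl <;>
      intro a ha <;> simp only [mem_Ico] at * <;> omega
  simp only [shift]
  exact sum_comm' fun j i => by simp only [mem_range, mem_Ico]; omega

lemma assoc_ex_eq_sum_add_br2 {m : ℕ} (h : C K L m) (n p : ℕ) (F G : (ℕ → L) → L) (x : ℕ → L) :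
    assoc m n p (ex h) F G x
      = ∑ i ∈ range m, ∑ j ∈ range i, pc p j (pc n i (ex h) F) G x + br2 m n p (ex h) F G x := by
  have left : tc (m + n - 1) p (tc m n (ex h) F) G x
      = ∑ j ∈ range (m + n - 1), ∑ i ∈ range m, pc p j (pc n i (ex h) F) G x :=
    sum_congr rfl fun j _ => pc_tc_left m n p j _ F G x
  have right : tc m (n + p - 1) (ex h) (tc n p F G) x
      = ∑ i ∈ range m, ∑ l ∈ range n, pc p (i + l) (pc n i (ex h) F) G x :=
    sum_congr rfl fun i hi => (pc_ex_tc h (mem_range.1 hi) _ n p F G x).trans <|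
      sum_congr rfl fun l hl => pc_ex_pc h (mem_range.1 hi) (mem_range.1 hl) p F G x
  rw [assoc, left, right, sum_comm, ← sum_sub_distrib, br2_eq_sum_Ico, ← sum_add_distrib]
  refine sum_congr rfl fun i hi => ?_
  have hi := mem_range.1 hi
  rw [← sum_range_add_sum_Ico _ (by omega : i + n ≤ m + n - 1), sum_range_add]
  abel

lemma sum_range_sum_range_pc_pc_eq_sgn_smul_br2 {n p : ℕ} (m : ℕ) (f : C K L n) (g : C K L p)
    (H : (ℕ → L) → L) (x : ℕ → L) :
    ∑ i ∈ range m, ∑ j ∈ range i, pc p j (pc n i H (ex f)) (ex g) x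
      = sgn (((n : ℤ) - 1) * ((p : ℤ) - 1)) • br2 m p n H (ex g) (ex f) x := by
  rw [br2_eq_sum_Ico, ← sum_range_sum_Ico_sub_add m p]
  simp only [smul_sum]
  refine sum_congr rfl fun j _ => sum_congr rfl fun k hk => ?_
  rw [pc_pc_ex_comm n g H (ex f) (mem_Ico.1 hk).1, mul_comm, sgn_smul_sgn_smul_self]

/-- the Vinberg identity `(h,f,g) = (-1)^{(n-1)(p-1)} (h,g,f)`
for the associator of the total composition. -/
theorem vinberg_identity
    {m n p : ℕ} (h : C K L m) (f : C K L n) (g : C K L p) :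
    assoc m n p (ex h) (ex f) (ex g)
      = sgn (((n : ℤ) - 1) * ((p : ℤ) - 1)) • assoc m p n (ex h) (ex g) (ex f) := by
  funext x
  rw [Pi.smul_apply, assoc_ex_eq_sum_add_br2, assoc_ex_eq_sum_add_br2,
    sum_range_sum_range_pc_pc_eq_sgn_smul_br2, sum_range_sum_range_pc_pc_eq_sgn_smul_br2,
    mul_comm ((p : ℤ) - 1), smul_add, sgn_smul_sgn_smul_self, add_comm]

end OperadPrelude
end

section
/- Graded Lie-admissibility: the Gerstenhaber bracket satisfies the graded Jacobi identity, i.e. for all multilinear maps f ∈ C^m, g ∈ C^n, h ∈ C^p, (−1)^{|f||h|}[[f,g],h] + (−1)^{|g||f|}[[g,h],f] + (−1)^{|h||g|}[[h,f],g] = 0; together with the graded antisymmetry [f,g] = −(−1)^{|f||g|}[g,f], this makes (C, [·,·]) a graded Lie algebra. -/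
/-!
Multilinearity lets an `m`-ary operation be read as a function of sequences, linear in each
inserted value. Partial compositions then satisfy the two operad axioms: insertions into disjoint
slots commute up to the sign `(-1)^{|g||h|}`, and nested insertions associate. Sorting the terms of
`(f ∘ g) ∘ h` by where `h` lands relative to `g` shows that the associator `(f, g, h)` is
`f{h, g} + (-1)^{|g||h|} f{g, h}`, hence graded symmetric in `g` and `h`: the composition is graded
pre-Lie. Expanding the three double brackets, the Jacobi sum is a signed combination of three
instances of this symmetry. Antisymmetry holds because the sign squares to `1`.
-/

open Finset

section OperadPrelude

variable {K : Type*} [CommRing K] {L : Type*} [AddCommGroup L] [Module K L]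

lemma pc_ex_eq {m : ℕ} (f : C K L m) {i : ℕ} (hi : i < m) (N : ℕ) (G : (ℕ → L) → L)
    (x : ℕ → L) :
    pc N i (ex f) G x = sgn (i * ((N : ℤ) - 1)) •
      f.toLinearMap
        (fun j : Fin m => if (j : ℕ) < i then x j else if (j : ℕ) = i then 0 else x (j + N - 1))
        ⟨i, hi⟩
        (G fun k => x (i + k)) := by
  rw [MultilinearMap.toLinearMap_apply, pc, ex]
  congr 2
  funext j
  rcases lt_trichotomy (j : ℕ) i with hj | hj | hj
  · simp [hj, Function.update_of_ne (Fin.ne_of_val_ne hj.ne : j ≠ ⟨i, hi⟩)]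
  · simp [show j = ⟨i, hi⟩ from Fin.ext hj]
  · simp [hj.ne', hj.not_gt, Function.update_of_ne (Fin.ne_of_val_ne hj.ne' : j ≠ ⟨i, hi⟩)]

lemma pc_pc_of_lt {n : ℕ} (g : C K L n) {i j : ℕ} (hij : i < j) (p : ℕ)
    (F H : (ℕ → L) → L) (x : ℕ → L) :
    pc p (j + n - 1) (pc n i F (ex g)) H x
      = sgn (((n : ℤ) - 1) * ((p : ℤ) - 1)) • pc n i (pc p j F H) (ex g) x := by
  simp only [pc, ex, smul_smul]
  congr 1
  · rw [← sgn_add, ← sgn_add, ← sgn_add]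
    congr 1
    push_cast [show 1 ≤ j + n by omega]
    ring
  · congr 1
    funext l
    split_ifs <;> first
      | omega | rfl | (congr 1; omega)
      | (congr 1; funext k; split_ifs <;> first | omega | rfl | (congr 1; omega))

lemma pc_pc_nested {m : ℕ} (f : C K L m) {i d n : ℕ} (hi : i < m) (hd : d < n) (p : ℕ)
    (G H : (ℕ → L) → L) (x : ℕ → L) :
    pc p (i + d) (pc n i (ex f) G) H x = pc (n + p - 1) i (ex f) (pc p d G H) x := by
  rw [pc, pc_ex_eq f hi, pc_ex_eq f hi, pc, map_zsmul, smul_smul, smul_smul]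
  congr 1
  · simp only [← sgn_add]
    congr 1
    push_cast [show 1 ≤ n + p by omega]
    ring
  · congr 2
    · funext l
      split_ifs <;> first | omega | rfl | (congr 1; omega)
    · funext k
      split_ifs <;> first
        | omega | rfl | (congr 1; omega)
        | (congr 1; funext k; congr 1; omega)

lemma tc_sub_smul_left (M N : ℕ) (c : ℤ) (F₁ F₂ H : (ℕ → L) → L) (x : ℕ → L) :
    tc M N (fun y => F₁ y - c • F₂ y) H x = tc M N F₁ H x - c • tc M N F₂ H x := by
  simp only [tc, pc, smul_sub, smul_comm _ c, Finset.sum_sub_distrib, Finset.smul_sum]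

lemma tc_ex_sub_smul_right {m : ℕ} (f : C K L m) (N : ℕ) (c : ℤ) (G₁ G₂ : (ℕ → L) → L)
    (x : ℕ → L) :
    tc m N (ex f) (fun y => G₁ y - c • G₂ y) x = tc m N (ex f) G₁ x - c • tc m N (ex f) G₂ x := by
  simp only [tc, Finset.smul_sum, ← Finset.sum_sub_distrib]
  refine Finset.sum_congr rfl fun i hi => ?_
  simp only [pc_ex_eq f (Finset.mem_range.mp hi), map_sub, map_zsmul, smul_sub, smul_comm _ c]

lemma tc_tc (M m n p : ℕ) (F G H : (ℕ → L) → L) (x : ℕ → L) :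
    tc M p (tc m n F G) H x = ∑ i ∈ range m, ∑ k ∈ range M, pc p k (pc n i F G) H x := by
  simp only [tc, pc, Finset.smul_sum]
  exact Finset.sum_comm

lemma tc_ex_tc {m : ℕ} (f : C K L m) (N n p : ℕ) (G H : (ℕ → L) → L) (x : ℕ → L) :
    tc m N (ex f) (tc n p G H) x = ∑ i ∈ range m, ∑ d ∈ range n, pc N i (ex f) (pc p d G H) x := by
  refine Finset.sum_congr rfl fun i hi => ?_
  simp only [tc, pc_ex_eq f (Finset.mem_range.mp hi), map_sum, Finset.smul_sum]

lemma sum_range_add_sub_one_split {M : Type*} [AddCommMonoid M] {i m : ℕ} (hi : i < m) (n : ℕ)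
    (a : ℕ → M) :
    ∑ k ∈ range (m + n - 1), a k
      = ∑ k ∈ range i, a k + ∑ d ∈ range n, a (i + d) + ∑ j ∈ Ico (i + 1) m, a (j + n - 1) := by
  rw [← Finset.sum_range_add, ← Finset.sum_range_add_sum_Ico _ (by omega : i + n ≤ m + n - 1),
    Finset.sum_Ico_eq_sum_range, Finset.sum_Ico_eq_sum_range,
    show m + n - 1 - (i + n) = m - (i + 1) by omega]
  congr 1
  exact Finset.sum_congr rfl fun e _ => congrArg a (by omega)

/-- The brace `f{h, g}`: `g` is inserted into slot `i` of `f` and `h` into an earlier slot. -/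
def brace (m n p : ℕ) (F G H : (ℕ → L) → L) (x : ℕ → L) : L :=
  ∑ i ∈ range m, ∑ j ∈ range i, pc p j (pc n i F G) H x

theorem assoc_eq_brace_add_brace {m n p : ℕ} (f : C K L m) (g : C K L n) (h : C K L p)
    (x : ℕ → L) :
    assoc m n p (ex f) (ex g) (ex h) x
      = brace m n p (ex f) (ex g) (ex h) x
        + sgn (((n : ℤ) - 1) * ((p : ℤ) - 1)) • brace m p n (ex f) (ex h) (ex g) x := by
  have split : ∀ i ∈ range m,
      ∑ k ∈ range (m + n - 1), pc p k (pc n i (ex f) (ex g)) (ex h) x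
        = ∑ j ∈ range i, pc p j (pc n i (ex f) (ex g)) (ex h) x
          + ∑ d ∈ range n, pc (n + p - 1) i (ex f) (pc p d (ex g) (ex h)) x
          + sgn (((n : ℤ) - 1) * ((p : ℤ) - 1)) •
              ∑ j ∈ Ico (i + 1) m, pc n i (pc p j (ex f) (ex h)) (ex g) x := by
    intro i hi
    have hi := Finset.mem_range.mp hi
    rw [sum_range_add_sub_one_split hi, Finset.smul_sum]
    congr 1
    · congr 1
      exact Finset.sum_congr rfl fun d hd =>
        pc_pc_nested f hi (Finset.mem_range.mp hd) p _ _ x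
    · exact Finset.sum_congr rfl fun j hj =>
        pc_pc_of_lt g (Finset.mem_Ico.mp hj).1 p _ _ x
  have swap : ∑ i ∈ range m, ∑ j ∈ Ico (i + 1) m, pc n i (pc p j (ex f) (ex h)) (ex g) x
      = ∑ j ∈ range m, ∑ i ∈ range j, pc n i (pc p j (ex f) (ex h)) (ex g) x :=
    Finset.sum_comm' fun i j => by simp only [Finset.mem_range, Finset.mem_Ico]; omega
  rw [assoc, tc_tc, tc_ex_tc, Finset.sum_congr rfl split, Finset.sum_add_distrib,
    Finset.sum_add_distrib, ← Finset.smul_sum, swap, brace, brace]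
  abel

theorem assoc_ex_swap {m n p : ℕ} (f : C K L m) (g : C K L n) (h : C K L p) (x : ℕ → L) :
    assoc m n p (ex f) (ex g) (ex h) x
      = sgn (((n : ℤ) - 1) * ((p : ℤ) - 1)) • assoc m p n (ex f) (ex h) (ex g) x := by
  rw [assoc_eq_brace_add_brace, assoc_eq_brace_add_brace, smul_add, smul_smul,
    mul_comm ((p : ℤ) - 1), sgn_mul_self, one_smul, add_comm]

lemma sgn_bracket_degree_mul {m n : ℕ} (hmn : 0 < m + n) (p : ℕ) :
    sgn ((((m + n - 1 : ℕ) : ℤ) - 1) * ((p : ℤ) - 1))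
      = sgn (((m : ℤ) - 1) * ((p : ℤ) - 1)) * sgn (((n : ℤ) - 1) * ((p : ℤ) - 1)) := by
  rw [← sgn_add]
  congr 1
  push_cast [hmn]
  ring

lemma smul_gb_gb_ex {m n p : ℕ} (X Y : (ℕ → L) → L) (z : C K L p) (x : ℕ → L) :
    sgn (((m : ℤ) - 1) * ((p : ℤ) - 1)) • gb (m + n - 1) p (gb m n X Y) (ex z) x
      = sgn (((m : ℤ) - 1) * ((p : ℤ) - 1)) • tc (m + n - 1) p (tc m n X Y) (ex z) x
        - (sgn (((m : ℤ) - 1) * ((p : ℤ) - 1)) * sgn (((m : ℤ) - 1) * ((n : ℤ) - 1))) •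
            tc (m + n - 1) p (tc n m Y X) (ex z) x
        - sgn (((n : ℤ) - 1) * ((p : ℤ) - 1)) • tc p (m + n - 1) (ex z) (tc m n X Y) x
        + (sgn (((n : ℤ) - 1) * ((p : ℤ) - 1)) * sgn (((m : ℤ) - 1) * ((n : ℤ) - 1))) •
            tc p (m + n - 1) (ex z) (tc n m Y X) x := by
  unfold gb
  rw [tc_sub_smul_left, tc_ex_sub_smul_right]
  rcases Nat.eq_zero_or_pos (m + n) with hmn | hmn
  · -- `0 + 0 - 1` truncates to `0` and spoils the outer sign, but `X ∘ Y = Y ∘ X = 0`.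
    obtain ⟨rfl, rfl⟩ : m = 0 ∧ n = 0 := by omega
    simp only [tc_ex_tc, Finset.sum_range_zero, Finset.sum_const_zero]
    simp [tc]
  · simp only [sgn_bracket_degree_mul hmn, smul_sub, smul_smul, ← mul_assoc, sgn_mul_self,
      one_mul]
    abel

theorem gb_ex_jacobi {m n p : ℕ} (f : C K L m) (g : C K L n) (h : C K L p) (x : ℕ → L) :
    sgn (((m : ℤ) - 1) * ((p : ℤ) - 1)) • gb (m + n - 1) p (gb m n (ex f) (ex g)) (ex h) x
      + sgn (((n : ℤ) - 1) * ((m : ℤ) - 1)) • gb (n + p - 1) m (gb n p (ex g) (ex h)) (ex f) x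
      + sgn (((p : ℤ) - 1) * ((n : ℤ) - 1)) • gb (p + m - 1) n (gb p m (ex h) (ex f)) (ex g) x
      = 0 := by
  have hfgh := assoc_ex_swap f g h x
  have hghf := assoc_ex_swap g h f x
  have hhfg := assoc_ex_swap h f g x
  rw [assoc, assoc, Nat.add_comm m p, Nat.add_comm p n] at hfgh
  rw [assoc, assoc, Nat.add_comm n m, Nat.add_comm m p] at hghf
  rw [assoc, assoc, Nat.add_comm p n, Nat.add_comm n m] at hhfg
  rw [smul_gb_gb_ex, smul_gb_gb_ex, smul_gb_gb_ex]
  rw [mul_comm ((n : ℤ) - 1) ((m : ℤ) - 1), mul_comm ((p : ℤ) - 1) ((m : ℤ) - 1),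
    mul_comm ((p : ℤ) - 1) ((n : ℤ) - 1)] at *
  linear_combination (norm := module)
    sgn (((m : ℤ) - 1) * ((p : ℤ) - 1)) • hfgh + sgn (((m : ℤ) - 1) * ((n : ℤ) - 1)) • hghf
      + sgn (((n : ℤ) - 1) * ((p : ℤ) - 1)) • hhfg

theorem gb_antisymm (m n : ℕ) (F G : (ℕ → L) → L) (x : ℕ → L) :
    gb m n F G x = -(sgn (((m : ℤ) - 1) * ((n : ℤ) - 1)) • gb n m G F x) := by
  rw [gb, gb, mul_comm ((n : ℤ) - 1), smul_sub, smul_smul, sgn_mul_self, one_smul, neg_sub]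

/-- graded Lie-admissibility: the Gerstenhaber bracket satisfies
the graded Jacobi identity and graded antisymmetry. -/
theorem gerstenhaber_bracket_graded_lie
    {m n p : ℕ} (f : C K L m) (g : C K L n) (h : C K L p) :
    (sgn (((m : ℤ) - 1) * ((p : ℤ) - 1)) •
          gb (m + n - 1) p (gb m n (ex f) (ex g)) (ex h)
        + sgn (((n : ℤ) - 1) * ((m : ℤ) - 1)) •
            gb (n + p - 1) m (gb n p (ex g) (ex h)) (ex f)
        + sgn (((p : ℤ) - 1) * ((n : ℤ) - 1)) •
            gb (p + m - 1) n (gb p m (ex h) (ex f)) (ex g) = 0) ∧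
      gb m n (ex f) (ex g)
        = -(sgn (((m : ℤ) - 1) * ((n : ℤ) - 1)) • gb n m (ex g) (ex f)) :=
  ⟨funext (gb_ex_jacobi f g h), funext (gb_antisymm m n (ex f) (ex g))⟩

end OperadPrelude
end
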